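/- Let G be a finite group with a representation group G̃, i.e. a central extension 1 → Z → G̃ → G → 1 with Z ⊆ Z(G̃) ∩ G̃' and transgression tra : Hom(Z, ℂˣ) → H²(G, ℂˣ) an isomorphism. Then the complex group algebra of G̃ decomposes as ℂG̃ ≅ ∏_{[α] ∈ H²(G, ℂˣ)} ℂ^α G, a product of the twisted group algebras of G over all cohomology classes. -/

import Mathlib

/-!
Write `Z = ker f` and factor every `a : Gs` as `a = z(a) * μ (f a)` with `z(a) = kerFactor hμ a`.
Since `Z` is central, `z(a b) = z(a) z(b) σ(f a, f b)` where `σ = secElem f μ hμ`. Hence for a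
character `χ` of `Z` and a basis `e` of `ℂ^{χ ∘ σ} G`, the map `a ↦ χ(z(a)) • e (f a)` is
multiplicative, and as `χ` runs over the characters these maps assemble into an algebra map from
`ℂ Gs` to the product over `H²(G, ℂˣ)` (the transgression `χ ↦ [χ ∘ σ]` is a bijection, and
cohomologous cocycles give isomorphic twisted group algebras). The `e x`-coordinate of its
`χ`-component on `v` is the `χ`-Fourier coefficient of `v` on the coset `Z * μ x`, so injectivity
follows from the characters of the finite abelian group `Z` spanning `Z → ℂ`. Both sides have
dimension `|Z| |G| = |H²(G, ℂˣ)| |G|`.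
-/

/-- The multiplicative 2-cocycle condition for `α : G → G → ℂˣ` (trivial action). -/
def IsCocycle {G : Type*} [Group G] (α : G → G → ℂˣ) : Prop :=
  ∀ g h k : G, α g h * α (g * h) k = α h k * α g (h * k)

/-- `A` is a twisted group algebra `ℂ^α G`: it has a `ℂ`-basis indexed by `G`
with multiplication of basis elements twisted by `α`. -/
def IsTwistedGroupAlgebra (G : Type*) [Group G] (α : G → G → ℂˣ)
    (A : Type*) [Ring A] [Algebra ℂ A] : Prop :=
  ∃ b : Module.Basis G ℂ A, ∀ g h : G, b g * b h = (α g h : ℂ) • b (g * h)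

/-- The group of 2-cocycles of `G` with values in `ℂˣ` (trivial action). -/
def Z2 (G : Type*) [Group G] : Subgroup (G → G → ℂˣ) where
  carrier := {α | IsCocycle α}
  one_mem' := by intro g h k; simp
  mul_mem' := by
    intro a b ha hb g h k
    simp only [Pi.mul_apply]
    rw [mul_mul_mul_comm, ha g h k, hb g h k, mul_mul_mul_comm]
  inv_mem' := by
    intro a ha g h k
    simp only [Pi.inv_apply]
    rw [← mul_inv, ha g h k, mul_inv]

/-- The coboundary map `(G → ℂˣ) →* (G → G → ℂˣ)`. -/
def B2hom (G : Type*) [Group G] : (G → ℂˣ) →* (G → G → ℂˣ) where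
  toFun μ := fun g h => μ g * μ h * (μ (g * h))⁻¹
  map_one' := by funext g h; simp
  map_mul' μ ν := by
    funext g h
    simp only [Pi.mul_apply, mul_inv]
    ac_rfl

/-- The group of 2-coboundaries. -/
def B2 (G : Type*) [Group G] : Subgroup (G → G → ℂˣ) := (B2hom G).range

/-- The second cohomology group `H²(G, ℂˣ)` with trivial action (Schur multiplier). -/
abbrev H2 (G : Type*) [Group G] := ↥(Z2 G) ⧸ ((B2 G).comap (Z2 G).subtype)

/-- For a central extension `f : Gs → G` with section `μ`, the element
`μ x * μ y * (μ (x y))⁻¹` of `ker f`. -/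
def secElem {Gs G : Type} [Group Gs] [Group G] (f : Gs →* G) (μ : G → Gs)
    (hμ : ∀ x, f (μ x) = x) (x y : G) : ↥f.ker :=
  ⟨μ x * μ y * (μ (x * y))⁻¹, by simp [MonoidHom.mem_ker, hμ, mul_assoc]⟩

open Module

section TwistedGroupAlgebra

variable {G A : Type*} [Group G] [Ring A] [Algebra ℂ A] {α : G → G → ℂˣ}

theorem IsCocycle.apply_one_left (hα : IsCocycle α) (g : G) : α 1 g = α 1 1 := by
  have h := hα 1 1 g
  simp only [one_mul] at h
  exact (mul_right_cancel h).symm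

theorem IsCocycle.inv_smul_basis_one (hα : IsCocycle α) (b : Basis G ℂ A)
    (hb : ∀ g h : G, b g * b h = (α g h : ℂ) • b (g * h)) :
    (((α 1 1)⁻¹ : ℂˣ) : ℂ) • b 1 = 1 := by
  have hleft : LinearMap.mulLeft ℂ ((((α 1 1)⁻¹ : ℂˣ) : ℂ) • b 1) = LinearMap.id := by
    refine b.ext fun g => ?_
    simp [hb, hα.apply_one_left g, smul_smul]
  simpa using congrArg (fun L : A →ₗ[ℂ] A => L 1) hleft

theorem IsTwistedGroupAlgebra.of_cohomologous {α β : ↥(Z2 G)}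
    (h : (QuotientGroup.mk α : H2 G) = QuotientGroup.mk β)
    (hA : IsTwistedGroupAlgebra G β.1 A) : IsTwistedGroupAlgebra G α.1 A := by
  obtain ⟨b, hb⟩ := hA
  obtain ⟨ν, hν⟩ := QuotientGroup.eq.mp h
  have hβ : ∀ g h : G, (β.1 g h : ℂ) = α.1 g h * (ν g * ν h * (ν (g * h) : ℂ)⁻¹) := by
    intro g h
    have := congrArg Units.val (congrFun (congrFun hν g) h)
    simp only [B2hom, MonoidHom.coe_mk, OneHom.coe_mk, Subgroup.coe_subtype, Subgroup.coe_mul,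
      Subgroup.coe_inv, Pi.mul_apply, Pi.inv_apply, Units.val_mul, Units.val_inv_eq_inv_val] at this
    rw [this]
    field_simp
  refine ⟨b.unitsSMul fun g => (ν g)⁻¹, fun g h => ?_⟩
  simp only [Basis.unitsSMul_apply, Units.smul_def, smul_mul_smul_comm, hb, smul_smul]
  congr 1
  simp only [Units.val_inv_eq_inv_val, hβ]
  field_simp

end TwistedGroupAlgebra

theorem nonempty_monoidHom_complexUnits_mulEquiv (K : Type*) [CommGroup K] [Finite K] :
    Nonempty ((K →* ℂˣ) ≃* K) :=
  have : NeZero (Monoid.exponent K : ℂ) := ⟨by exact_mod_cast Monoid.exponent_ne_zero_of_finite⟩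
  CommGroup.monoidHom_mulEquiv_of_hasEnoughRootsOfUnity K ℂ

theorem eq_zero_of_forall_sum_mul_monoidHom_eq_zero {K : Type*} [CommGroup K] [Fintype K]
    (c : K → ℂ) (hc : ∀ χ : K →* ℂˣ, ∑ k, c k * χ k = 0) : c = 0 := by
  classical
  obtain ⟨dual⟩ := nonempty_monoidHom_complexUnits_mulEquiv K
  have : Fintype (K →* ℂˣ) := Fintype.ofEquiv K dual.symm.toEquiv
  let char : (K →* ℂˣ) → K → ℂ := fun χ k => χ k
  have hind : LinearIndependent ℂ char :=
    (linearIndependent_monoidHom K ℂ).comp (fun χ => (Units.coeHom ℂ).comp χ)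
      fun χ χ' h => MonoidHom.ext fun k => Units.ext (DFunLike.congr_fun h k)
  have hspan : Submodule.span ℂ (Set.range char) = ⊤ :=
    hind.span_eq_top_of_card_eq_finrank' <| by
      rw [Module.finrank_fintype_fun_eq_card]; exact Fintype.card_congr dual.toEquiv
  have hzero : Fintype.linearCombination ℂ c = 0 :=
    LinearMap.ext_on_range hspan fun χ => by
      simpa [Fintype.linearCombination_apply, char, mul_comm] using hc χ
  funext k
  simpa using congrArg (fun L : (K → ℂ) →ₗ[ℂ] ℂ => L (Pi.single k 1)) hzero

section CentralExtension

variable {Gs G : Type} [Group Gs] [Group G] {f : Gs →* G} {μ : G → Gs}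

abbrev kerCommGroup (hcent : f.ker ≤ Subgroup.center Gs) : CommGroup ↥f.ker where
  mul_comm a b := Subtype.ext (Subgroup.mem_center_iff.mp (hcent a.2) b).symm

def kerFactor (hμ : ∀ x, f (μ x) = x) (a : Gs) : ↥f.ker :=
  ⟨a * (μ (f a))⁻¹, by simp [MonoidHom.mem_ker, hμ]⟩

theorem map_ker_mul_section (hμ : ∀ x, f (μ x) = x) (k : ↥f.ker) (x : G) : f (k * μ x) = x := by
  simp [MonoidHom.mem_ker.mp k.2, hμ]

theorem kerFactor_mul_section (hμ : ∀ x, f (μ x) = x) (a : Gs) :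
    (kerFactor hμ a : Gs) * μ (f a) = a := by
  simp [kerFactor]

theorem kerFactor_ker_mul_section (hμ : ∀ x, f (μ x) = x) (k : ↥f.ker) (x : G) :
    kerFactor hμ (k * μ x) = k :=
  Subtype.ext <| by simp [kerFactor, map_ker_mul_section hμ]

def kerProdEquiv (hμ : ∀ x, f (μ x) = x) : ↥f.ker × G ≃ Gs where
  toFun p := p.1 * μ p.2
  invFun a := (kerFactor hμ a, f a)
  left_inv p := by simp [kerFactor_ker_mul_section hμ, map_ker_mul_section hμ]
  right_inv := kerFactor_mul_section hμ

theorem kerFactor_one (hμ : ∀ x, f (μ x) = x) : kerFactor hμ 1 = (secElem f μ hμ 1 1)⁻¹ :=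
  Subtype.ext <| by simp [kerFactor, secElem]

theorem kerFactor_mul (hμ : ∀ x, f (μ x) = x) (hcent : f.ker ≤ Subgroup.center Gs) (a b : Gs) :
    kerFactor hμ (a * b) = kerFactor hμ a * kerFactor hμ b * secElem f μ hμ (f a) (f b) := by
  refine Subtype.ext ?_
  have hb : (kerFactor hμ b : Gs) * (μ (f a))⁻¹ = (μ (f a))⁻¹ * kerFactor hμ b :=
    (Subgroup.mem_center_iff.mp (hcent (kerFactor hμ b).2) _).symm
  simp only [kerFactor, secElem, Subgroup.coe_mul, map_mul] at hb ⊢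
  calc a * b * (μ (f a * f b))⁻¹
      = a * (b * (μ (f b))⁻¹ * (μ (f a))⁻¹) * μ (f a) * μ (f b) * (μ (f a * f b))⁻¹ := by group
    _ = a * ((μ (f a))⁻¹ * (b * (μ (f b))⁻¹)) * μ (f a) * μ (f b) * (μ (f a * f b))⁻¹ := by
        rw [hb]
    _ = _ := by group

theorem card_eq_card_ker_mul_card [Fintype Gs] [Fintype ↥f.ker] [Fintype G]
    (hμ : ∀ x, f (μ x) = x) :
    Fintype.card Gs = Fintype.card ↥f.ker * Fintype.card G :=
  (Fintype.card_congr (kerProdEquiv hμ).symm).trans (Fintype.card_prod _ _)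

theorem eq_zero_of_forall_sum_coeff_mul_monoidHom_eq_zero
    (hμ : ∀ x, f (μ x) = x) (hcent : f.ker ≤ Subgroup.center Gs)
    [Fintype ↥f.ker] (v : MonoidAlgebra ℂ Gs)
    (hv : ∀ (χ : ↥f.ker →* ℂˣ) (x : G), ∑ k : ↥f.ker, v.coeff (k * μ x) * χ k = 0) : v = 0 := by
  let _ := kerCommGroup hcent
  ext a
  have := congrFun (eq_zero_of_forall_sum_mul_monoidHom_eq_zero _ (hv · (f a))) (kerFactor hμ a)
  rwa [kerFactor_mul_section] at this

end CentralExtension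

section TwistedRepresentation

variable {Gs G : Type} {A : Type*} [Group Gs] [Group G] [Ring A] [Algebra ℂ A]
  {f : Gs →* G} {μ : G → Gs}
  (hμ : ∀ x, f (μ x) = x) (hcent : f.ker ≤ Subgroup.center Gs) {χ : ↥f.ker →* ℂˣ}
  (hχ : IsCocycle fun x y => χ (secElem f μ hμ x y)) (e : Basis G ℂ A)
  (he : ∀ g h : G, e g * e h = (χ (secElem f μ hμ g h) : ℂ) • e (g * h))

noncomputable def twistedRep : Gs →* A where
  toFun a := (χ (kerFactor hμ a) : ℂ) • e (f a)
  map_one' := by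
    rw [kerFactor_one, map_inv, map_one]
    exact hχ.inv_smul_basis_one e he
  map_mul' a b := by
    rw [smul_mul_smul_comm, he, smul_smul, kerFactor_mul hμ hcent, map_mul, map_mul, map_mul f]
    push_cast
    ring_nf

theorem repr_lift_twistedRep [Fintype Gs] [Fintype ↥f.ker] [Fintype G]
    (v : MonoidAlgebra ℂ Gs) (x : G) :
    e.repr (MonoidAlgebra.lift ℂ A Gs (twistedRep hμ hcent hχ e he) v) x =
      ∑ k : ↥f.ker, v.coeff (k * μ x) * χ k := by
  classical
  rw [MonoidAlgebra.lift_apply, Finsupp.sum_fintype _ _ (by simp), map_sum,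
    Finsupp.finsetSum_apply, ← (kerProdEquiv hμ).sum_comp, Fintype.sum_prod_type]
  simp [twistedRep, kerProdEquiv, kerFactor_ker_mul_section, map_ker_mul_section hμ,
    Finsupp.single_apply]

end TwistedRepresentation

theorem stmt_11_general (Gs G : Type) [Group Gs] [Group G] [Fintype Gs] [Fintype G]
    (f : Gs →* G)
    (hcent : f.ker ≤ Subgroup.center Gs)
    (μ : G → Gs) (hμ : ∀ x, f (μ x) = x)
    (hcoc : ∀ χ : ↥f.ker →* ℂˣ, (fun x y => χ (secElem f μ hμ x y)) ∈ Z2 G)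
    (htra : Function.Bijective fun χ : ↥f.ker →* ℂˣ =>
      (QuotientGroup.mk ⟨fun x y => χ (secElem f μ hμ x y), hcoc χ⟩ : H2 G))
    (B : ↥(Z2 G) → Type) [∀ β, Ring (B β)] [∀ β, Algebra ℂ (B β)]
    (hB : ∀ β, IsTwistedGroupAlgebra G β.1 (B β)) :
    Nonempty (MonoidAlgebra ℂ Gs ≃ₐ[ℂ] ∀ c : H2 G, B (Quotient.out c)) := by
  classical
  let _ := kerCommGroup hcent
  obtain ⟨dual⟩ := nonempty_monoidHom_complexUnits_mulEquiv ↥f.ker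
  let τ : (↥f.ker →* ℂˣ) ≃ H2 G := Equiv.ofBijective _ htra
  have : Fintype (H2 G) := .ofEquiv _ (dual.toEquiv.symm.trans τ)
  have hbasis (c : H2 G) : ∃ e : Basis G ℂ (B (Quotient.out c)),
      ∀ g h : G, e g * e h = (τ.symm c (secElem f μ hμ g h) : ℂ) • e (g * h) :=
    (hB _).of_cohomologous ((τ.apply_symm_apply c).trans (QuotientGroup.out_eq' c).symm)
  choose e he using hbasis
  have : ∀ c, Module.Free ℂ (B (Quotient.out c)) := fun c => .of_basis (e c)
  have : ∀ c, Module.Finite ℂ (B (Quotient.out c)) := fun c => .of_basis (e c)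
  -- `hcoc` restated through the unfolded `Z2` so that the `rw` below matches syntactically
  have hα (χ : ↥f.ker →* ℂˣ) : IsCocycle fun x y => χ (secElem f μ hμ x y) := hcoc χ
  let Φ := AlgHom.pi fun c =>
    MonoidAlgebra.lift ℂ _ Gs (twistedRep hμ hcent (hα (τ.symm c)) (e c) (he c))
  have hinj : Function.Injective Φ := by
    refine (injective_iff_map_eq_zero Φ).mpr fun v hv => ?_
    refine eq_zero_of_forall_sum_coeff_mul_monoidHom_eq_zero hμ hcent v fun χ x => ?_
    have h0 : (e (τ χ)).repr (Φ v (τ χ)) x = 0 := by simp [hv]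
    rwa [AlgHom.pi_apply, repr_lift_twistedRep, τ.symm_apply_apply] at h0
  have hdim : finrank ℂ (MonoidAlgebra ℂ Gs) = finrank ℂ (∀ c : H2 G, B (Quotient.out c)) := by
    rw [finrank_eq_card_basis (MonoidAlgebra.basis Gs ℂ), card_eq_card_ker_mul_card hμ,
      Fintype.card_congr (dual.toEquiv.symm.trans τ)]
    simp [finrank_pi_fintype, finrank_eq_card_basis (e _)]
  have hsurj := (LinearMap.injective_iff_surjective_of_finrank_eq_finrank hdim
    (f := Φ.toLinearMap)).mp hinj
  exact ⟨.ofBijective Φ ⟨hinj, hsurj⟩⟩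

theorem stmt_11 (Gs G : Type) [Group Gs] [Group G] [Fintype Gs] [Fintype G]
    (f : Gs →* G) (hsurj : Function.Surjective f)
    (hcent : f.ker ≤ Subgroup.center Gs) (hder : f.ker ≤ commutator Gs)
    (μ : G → Gs) (hμ : ∀ x, f (μ x) = x)
    (hcoc : ∀ χ : ↥f.ker →* ℂˣ, (fun x y => χ (secElem f μ hμ x y)) ∈ Z2 G)
    (htra : Function.Bijective fun χ : ↥f.ker →* ℂˣ =>
      (QuotientGroup.mk ⟨fun x y => χ (secElem f μ hμ x y), hcoc χ⟩ : H2 G))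
    (B : ↥(Z2 G) → Type) [∀ β, Ring (B β)] [∀ β, Algebra ℂ (B β)]
    (hB : ∀ β, IsTwistedGroupAlgebra G β.1 (B β)) :
    Nonempty (MonoidAlgebra ℂ Gs ≃ₐ[ℂ] ∀ c : H2 G, B (Quotient.out c)) :=
  stmt_11_general Gs G f hcent μ hμ hcoc htra B hB
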